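/- arXiv:2202.08085 — 3 statements merged into one kernel-verified Lean document; each statement's English description precedes it below -/
import Mathlib

section
/- Let (F, ‖·‖) be an n-dimensional real Banach space and ε > 0. Then there exist N ≤ (3+ε)^n and functionals x₁*, …, x_N* in the unit sphere of F* such that the norm |x| = max_{i≤N} x_i*(x) satisfies |x| ≤ ‖x‖ ≤ ((2+ε)/ε)·|x| for all x ∈ F. -/
/-!
Take for the functionals a maximal `δ`-separated subset of the unit sphere of the dual, with
`δ = 2 / (2 + ε)`. The closed balls of radius `δ / 2` around its points are disjoint and lie in
the ball of radius `1 + δ / 2`, so comparing Haar measures bounds its size by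
`((2 + δ) / δ) ^ n = (3 + ε) ^ n`. By maximality it is a `δ`-net of the dual sphere: if `g` norms
`x`, some `z` in the net has `z x ≥ g x - δ ‖x‖ = ε / (2 + ε) * ‖x‖`.
-/

open Metric MeasureTheory Module Finset
open scoped ENNReal NNReal

namespace Metric

variable {E : Type*} [NormedAddCommGroup E] [NormedSpace ℝ E] [FiniteDimensional ℝ E]
  {δ : ℝ≥0} {r : ℝ} {x : E}

theorem IsSeparated.card_le_of_subset_closedBall (hδ : 0 < δ) (hr : 0 ≤ r) {t : Finset E}
    (ht : IsSeparated δ (t : Set E)) (htx : (t : Set E) ⊆ closedBall x r) :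
    (#t : ℝ) ≤ ((2 * r + δ) / δ) ^ finrank ℝ E := by
  borelize E
  let μ : Measure E := (finBasis ℝ E).addHaar
  have hδ2 : (0 : ℝ) ≤ δ / 2 := by positivity
  have hdisj : (t : Set E).PairwiseDisjoint (closedBall · (δ / 2)) := fun a ha b hb hab ↦
    closedBall_disjoint_closedBall <| by
      have : (δ : ℝ≥0∞) < edist a b := ht ha hb hab
      rw [edist_nndist, ENNReal.coe_lt_coe, ← NNReal.coe_lt_coe, coe_nndist] at this
      linarith
  have hsub : (⋃ z ∈ t, closedBall z (δ / 2)) ⊆ closedBall x (r + δ / 2) :=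
    Set.iUnion₂_subset fun z hz ↦ closedBall_subset_closedBall' <| by
      have := htx hz
      rw [mem_closedBall] at this
      linarith
  have hvol : #t * ((δ / 2) ^ finrank ℝ E * μ.real (closedBall 0 1)) ≤
      (r + δ / 2) ^ finrank ℝ E * μ.real (closedBall 0 1) := calc
    _ = ∑ z ∈ t, μ.real (closedBall z (δ / 2)) := by
      simp [Measure.addHaar_real_closedBall' μ _ hδ2]
    _ = μ.real (⋃ z ∈ t, closedBall z (δ / 2)) :=
      (measureReal_biUnion_finset hdisj (fun _ _ ↦ measurableSet_closedBall)
        fun _ _ ↦ measure_closedBall_lt_top.ne).symm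
    _ ≤ μ.real (closedBall x (r + δ / 2)) := measureReal_mono hsub measure_closedBall_lt_top.ne
    _ = _ := Measure.addHaar_real_closedBall' μ _ (by positivity)
  have hball : 0 < μ.real (closedBall (0 : E) 1) :=
    ENNReal.toReal_pos (measure_closedBall_pos μ 0 one_pos).ne' measure_closedBall_lt_top.ne
  rw [← mul_assoc, mul_le_mul_iff_left₀ hball, ← le_div_iff₀ (by positivity), ← div_pow] at hvol
  refine hvol.trans_eq (congrArg (· ^ _) ?_)
  field_simp

theorem packingNumber_le_of_subset_closedBall (hδ : 0 < δ) (hr : 0 ≤ r) {A : Set E}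
    (hA : A ⊆ closedBall x r) :
    packingNumber δ A ≤ ⌊((2 * r + δ) / δ) ^ finrank ℝ E⌋₊ := by
  refine iSup₂_le fun C hCA ↦ iSup_le fun hC ↦ ?_
  by_contra! hlarge
  obtain ⟨s, hsC, hs⟩ := Set.exists_subset_encard_eq (Order.add_one_le_of_lt hlarge)
  have hfin : s.Finite := Set.finite_of_encard_eq_coe hs
  have hcard := IsSeparated.card_le_of_subset_closedBall hδ hr (t := hfin.toFinset)
    (by simpa using IsSeparated.subset hsC hC) (by simpa using hsC.trans (hCA.trans hA))
  rw [← Set.ncard_eq_toFinset_card _ hfin, Set.ncard_def, hs] at hcard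
  exact (Nat.lt_floor_add_one _).not_ge (by exact_mod_cast hcard)

theorem exists_finset_isCover_card_le (hδ : 0 < δ) (hr : 0 ≤ r) {A : Set E}
    (hA : A ⊆ closedBall x r) :
    ∃ T : Finset E, (T : Set E) ⊆ A ∧ IsCover δ A T ∧
      (#T : ℝ) ≤ ((2 * r + δ) / δ) ^ finrank ℝ E := by
  have hfinite : packingNumber δ A ≠ ⊤ :=
    ne_top_of_le_ne_top (ENat.natCast_ne_top _) (packingNumber_le_of_subset_closedBall hδ hr hA)
  have hfin : (maximalSeparatedSet δ A).Finite := by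
    rw [← Set.encard_ne_top_iff, encard_maximalSeparatedSet hfinite]
    exact hfinite
  refine ⟨hfin.toFinset, by simpa using maximalSeparatedSet_subset, by
    simpa using isCover_maximalSeparatedSet hfinite, ?_⟩
  exact IsSeparated.card_le_of_subset_closedBall hδ hr
    (by simpa using isSeparated_maximalSeparatedSet)
    (by simpa using maximalSeparatedSet_subset.trans hA)

end Metric

section Norming

variable {F : Type*} [NormedAddCommGroup F] [NormedSpace ℝ F] {ι : Type*} {f : ι → StrongDual ℝ F}

theorem iSup_apply_le_norm (hf : ∀ i, ‖f i‖ ≤ 1) (x : F) : ⨆ i, f i x ≤ ‖x‖ :=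
  Real.iSup_le (fun i ↦ (le_abs_self _).trans <| ((f i).le_of_opNorm_le (hf i) x).trans_eq
    (one_mul _)) (norm_nonneg x)

theorem one_sub_mul_norm_le_iSup_apply [Finite ι] {δ : ℝ≥0}
    (hf : IsCover δ (sphere 0 1) (Set.range f)) (x : F) :
    (1 - δ) * ‖x‖ ≤ ⨆ i, f i x := by
  rcases eq_or_ne x 0 with rfl | hx
  · simp
  obtain ⟨g, hg, hgx⟩ := exists_dual_vector ℝ x (norm_ne_zero_iff.mpr hx)
  replace hgx : g x = ‖x‖ := hgx
  obtain ⟨_, ⟨i, rfl⟩, hgi⟩ := hf (mem_sphere_zero_iff_norm.mpr hg)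
  replace hgi : edist g (f i) ≤ δ := hgi
  rw [edist_le_coe, ← NNReal.coe_le_coe, coe_nndist, dist_eq_norm] at hgi
  have hdiff : g x - f i x ≤ ‖g - f i‖ * ‖x‖ := (le_abs_self _).trans ((g - f i).le_opNorm x)
  calc (1 - δ) * ‖x‖ ≤ g x - ‖g - f i‖ * ‖x‖ := by
        rw [hgx]; linarith [mul_le_mul_of_nonneg_right hgi (norm_nonneg x)]
    _ ≤ f i x := by linarith
    _ ≤ ⨆ i, f i x := le_ciSup (f := fun i ↦ f i x) (Set.finite_range _).bddAbove i

end Norming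

theorem stmt_0 (F : Type*) [NormedAddCommGroup F] [NormedSpace ℝ F]
    [FiniteDimensional ℝ F] (n : ℕ) (hn : Module.finrank ℝ F = n)
    (ε : ℝ) (hε : 0 < ε) :
    ∃ (N : ℕ) (f : Fin N → (F →L[ℝ] ℝ)),
      (N : ℝ) ≤ (3 + ε) ^ n ∧
      (∀ i, ‖f i‖ = 1) ∧
      ∀ x : F, (⨆ i, f i x) ≤ ‖x‖ ∧ ‖x‖ ≤ ((2 + ε) / ε) * ⨆ i, f i x := by
  have hdual : finrank ℝ (F →L[ℝ] ℝ) = n := by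
    rw [← LinearMap.toContinuousLinearMap.finrank_eq, finrank_linearMap, finrank_self, mul_one, hn]
  let δ : ℝ≥0 := ⟨2 / (2 + ε), by positivity⟩
  have hδ : (δ : ℝ) = 2 / (2 + ε) := rfl
  have hδpos : 0 < δ := by rw [← NNReal.coe_pos, hδ]; positivity
  obtain ⟨T, hT, hTcover, hTcard⟩ :=
    exists_finset_isCover_card_le (E := F →L[ℝ] ℝ) hδpos zero_le_one sphere_subset_closedBall
  let f : Fin #T → F →L[ℝ] ℝ := fun i ↦ T.equivFin.symm i
  have hrange : Set.range f = T :=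
    T.equivFin.symm.surjective.range_comp Subtype.val |>.trans Subtype.range_coe
  have hnorm : ∀ i, ‖f i‖ = 1 := fun i ↦ mem_sphere_zero_iff_norm.mp (hT (T.equivFin.symm i).2)
  refine ⟨#T, f, ?_, hnorm, fun x ↦ ⟨iSup_apply_le_norm (fun i ↦ (hnorm i).le) x, ?_⟩⟩
  · rw [hdual, hδ] at hTcard
    refine hTcard.trans_eq (congrArg (· ^ n) ?_)
    field_simp
    ring
  · have hbound := one_sub_mul_norm_le_iSup_apply (hrange ▸ hTcover) x
    calc ‖x‖ = (2 + ε) / ε * ((1 - δ) * ‖x‖) := by rw [hδ]; field_simp; ring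
      _ ≤ _ := by gcongr
end

section
/- Let E, F be finite-dimensional subspaces of a Banach space X with E ⊆ F. Define ‖T‖_X = inf{‖T̃‖ : T̃ ∈ L(X,F), T̃|_E = T} for T ∈ L(E,F), and ‖S‖_{ΛX} = ν(i_{E,X}∘S) for S ∈ L(F,E), where ν is the nuclear norm of operators from F to X and i_{E,X} is the inclusion. Then for every T ∈ L(E,F), ‖T‖_X = sup{ tr(S∘T) : S ∈ L(F,E), ‖S‖_{ΛX} ≤ 1 }. -/
/-!
Both `‖·‖_X` and `ν` are seminorms, being infima of costs that add and scale, so Hahn–Banach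
gives norming functionals for them, and a linear functional `ψ` on `L(G, W)` with `G`
finite-dimensional is `B ↦ tr (L ∘ B)` for the operator `L : W → G` determined by
`g (L w) = ψ (g ⊗ w)`.

A functional norming `‖·‖_X` at `T` thus yields `S : F → E` with `tr (S ∘ T) = ‖T‖_X`.
To get `ν (i ∘ S) ≤ 1`, norm `i ∘ S` by some `B : X → F`: since `ν (g ⊗ x) ≤ ‖g‖ ‖x‖`, the
operator of a functional norming `ν` has norm at most `1`, and then
`ν (i ∘ S) = tr (B ∘ i ∘ S) = tr (S ∘ B|_E) ≤ ‖B|_E‖_X ≤ ‖B‖ ≤ 1`.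
Conversely, writing `i ∘ S = ∑ fᵢ ⊗ xᵢ` shows `tr (S ∘ T) = tr (T̃ ∘ i ∘ S) ≤ ν (i ∘ S) ‖T̃‖`
for every extension `T̃` of `T`.
-/

/-- The nuclear norm of a (finite-rank) operator, defined as the infimum of
`∑ ‖fᵢ‖ * ‖xᵢ‖` over finite representations `A = ∑ fᵢ ⊗ xᵢ`. -/
noncomputable def nuclearNorm {F X : Type*} [NormedAddCommGroup F] [NormedSpace ℝ F]
    [NormedAddCommGroup X] [NormedSpace ℝ X] (A : F →L[ℝ] X) : ℝ :=
  sInf {c | ∃ (k : ℕ) (f : Fin k → (F →L[ℝ] ℝ)) (x : Fin k → X),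
    (∀ v, A v = ∑ i, f i v • x i) ∧ c = ∑ i, ‖f i‖ * ‖x i‖}

section InfimumSeminorm

variable {V : Type*} [AddCommGroup V] [Module ℝ V]

theorem Seminorm.exists_dual_abs_le_apply_eq (p : Seminorm ℝ V) (v : V) :
    ∃ g : Module.Dual ℝ V, (∀ x, |g x| ≤ p x) ∧ g v = p v := by
  rcases eq_or_ne v 0 with rfl | hv
  · exact ⟨0, fun x => by simp, by simp⟩
  obtain ⟨g, hgv, hgp⟩ := Module.Dual.exists_extension_of_le_seminorm_real _
    (LinearPMap.mkSpanSingleton v (p v) hv).toFun (p := p) <| by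
      rintro ⟨x, hx⟩
      obtain ⟨c, rfl⟩ := Submodule.mem_span_singleton.1 hx
      calc _ = c * p v := LinearPMap.mkSpanSingleton'_apply _ _ _ _ _
        _ ≤ |c| * p v := mul_le_mul_of_nonneg_right (le_abs_self c) (apply_nonneg p v)
        _ = p (c • v) := by rw [map_smul_eq_mul, Real.norm_eq_abs]
  exact ⟨g, hgp, (hgv ⟨v, Submodule.mem_span_singleton_self v⟩).trans
    (LinearPMap.mkSpanSingleton_apply _ _ _ _)⟩

theorem Real.le_mul_sInf {s : Set ℝ} {a c : ℝ} (hs : s.Nonempty) (hc : 0 ≤ c)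
    (h : ∀ x ∈ s, a ≤ c * x) : a ≤ c * sInf s := by
  rw [← smul_eq_mul, ← Real.sInf_smul_of_nonneg hc]
  exact le_csInf hs.smul_set (by rintro _ ⟨x, hx, rfl⟩; exact h x hx)

noncomputable def sInfSeminorm (S : V → Set ℝ) (hne : ∀ x, (S x).Nonempty)
    (hnonneg : ∀ x, ∀ a ∈ S x, 0 ≤ a)
    (hadd : ∀ x y, ∀ a ∈ S x, ∀ b ∈ S y, ∃ c ∈ S (x + y), c ≤ a + b)
    (hsmul : ∀ (r : ℝ) x, ∀ a ∈ S x, |r| * a ∈ S (r • x)) : Seminorm ℝ V :=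
  have hbdd x : BddBelow (S x) := ⟨0, hnonneg x⟩
  Seminorm.ofSMulLE (fun x => sInf (S x))
    (by
      obtain ⟨a, ha⟩ := hne 0
      refine le_antisymm (csInf_le_of_le (hbdd 0) (by simpa using hsmul 0 0 a ha) (by simp)) ?_
      exact le_csInf (hne 0) (hnonneg 0))
    (fun x y => by
      rw [← csInf_add (hne x) (hbdd x) (hne y) (hbdd y)]
      refine le_csInf ((hne x).add (hne y)) ?_
      rintro _ ⟨a, ha, b, hb, rfl⟩
      obtain ⟨c, hc, hcab⟩ := hadd x y a ha b hb
      exact csInf_le_of_le (hbdd _) hc hcab)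
    (fun r x => Real.le_mul_sInf (hne x) (norm_nonneg r) fun a ha =>
      csInf_le (hbdd _) (hsmul r x a ha))

end InfimumSeminorm

section TraceDuality

variable {G W : Type*} [NormedAddCommGroup G] [NormedSpace ℝ G] [FiniteDimensional ℝ G]
  [NormedAddCommGroup W] [NormedSpace ℝ W]

theorem ContinuousLinearMap.sum_coord_smulRight {ι : Type*} [Fintype ι] (b : Module.Basis ι ℝ G)
    (B : G →L[ℝ] W) :
    ∑ i, (LinearMap.toContinuousLinearMap (b.coord i)).smulRight (B (b i)) = B := by
  ext v
  simp only [sum_apply, ContinuousLinearMap.smulRight_apply,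
    LinearMap.coe_toContinuousLinearMap', Module.Basis.coord_apply]
  simp_rw [← map_smul, ← map_sum, b.sum_repr]

noncomputable def Module.Dual.toOperator (φ : Module.Dual ℝ (G →L[ℝ] W)) : W →ₗ[ℝ] G :=
  (Module.evalEquiv ℝ G).symm.toLinearMap ∘ₗ LinearMap.mk₂ ℝ
    (fun w g => φ ((LinearMap.toContinuousLinearMap g).smulRight w))
    (fun w₁ w₂ g => by rw [← map_add]; congr 1; ext; simp)
    (fun c w g => by
      rw [smul_eq_mul, ← smul_eq_mul, ← map_smul]; congr 1; ext; exact smul_comm _ _ _)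
    (fun w g₁ g₂ => by rw [← map_add]; congr 1; ext; simp [add_smul])
    (fun c w g => by rw [smul_eq_mul, ← smul_eq_mul, ← map_smul]; congr 1; ext; simp [smul_smul])

theorem Module.Dual.apply_toOperator (φ : Module.Dual ℝ (G →L[ℝ] W)) (g : G →L[ℝ] ℝ) (w : W) :
    g (φ.toOperator w) = φ (g.smulRight w) := by
  change (g : Module.Dual ℝ G) _ = _
  simp only [Module.Dual.toOperator, LinearMap.coe_comp, LinearEquiv.coe_coe, Function.comp_apply,
    Module.apply_evalEquiv_symm_apply, LinearMap.mk₂_apply]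
  rfl

theorem Module.Dual.trace_toOperator_comp (φ : Module.Dual ℝ (G →L[ℝ] W)) (B : G →L[ℝ] W) :
    LinearMap.trace ℝ G (φ.toOperator ∘ₗ B) = φ B := by
  have hrankOne (f : G →L[ℝ] ℝ) (w : W) : φ.toOperator ∘ₗ (f.smulRight w : G →L[ℝ] W) =
      (f : G →ₗ[ℝ] ℝ).smulRight (φ.toOperator w) := by
    ext; simp
  rw [← ContinuousLinearMap.sum_coord_smulRight (Module.finBasis ℝ G) B,
    ContinuousLinearMap.toLinearMap_sum, ← LinearMap.compRight_apply ℝ, map_sum, map_sum, map_sum]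
  simp only [LinearMap.compRight_apply, hrankOne, LinearMap.trace_smulRight,
    ContinuousLinearMap.coe_coe, φ.apply_toOperator]

end TraceDuality

section NuclearNorm

variable {G X : Type*} [NormedAddCommGroup G] [NormedSpace ℝ G]
  [NormedAddCommGroup X] [NormedSpace ℝ X]

def nuclearCosts (A : G →L[ℝ] X) : Set ℝ :=
  {c | ∃ (k : ℕ) (f : Fin k → (G →L[ℝ] ℝ)) (x : Fin k → X),
    (∀ v, A v = ∑ i, f i v • x i) ∧ c = ∑ i, ‖f i‖ * ‖x i‖}

theorem nonneg_of_mem_nuclearCosts {A : G →L[ℝ] X} {c : ℝ} (hc : c ∈ nuclearCosts A) :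
    0 ≤ c := by
  obtain ⟨k, f, x, -, rfl⟩ := hc
  positivity

theorem add_mem_nuclearCosts {A B : G →L[ℝ] X} {a b : ℝ} (ha : a ∈ nuclearCosts A)
    (hb : b ∈ nuclearCosts B) : a + b ∈ nuclearCosts (A + B) := by
  obtain ⟨k, f, x, hA, rfl⟩ := ha
  obtain ⟨l, g, y, hB, rfl⟩ := hb
  refine ⟨k + l, Fin.append f g, Fin.append x y, fun v => ?_, ?_⟩ <;>
    simp [Fin.sum_univ_add, hA, hB]

theorem smul_mem_nuclearCosts {A : G →L[ℝ] X} {a : ℝ} (r : ℝ) (ha : a ∈ nuclearCosts A) :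
    |r| * a ∈ nuclearCosts (r • A) := by
  obtain ⟨k, f, x, hA, rfl⟩ := ha
  refine ⟨k, f, fun i => r • x i, fun v => ?_, ?_⟩
  · simp [hA, Finset.smul_sum, smul_comm r]
  · simp [norm_smul, Finset.mul_sum, mul_left_comm]

theorem smulRight_mem_nuclearCosts (f : G →L[ℝ] ℝ) (x : X) :
    ‖f‖ * ‖x‖ ∈ nuclearCosts (f.smulRight x) :=
  ⟨1, ![f], ![x], fun v => by simp, by simp⟩

theorem nuclearCosts_nonempty [FiniteDimensional ℝ G] (A : G →L[ℝ] X) :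
    (nuclearCosts A).Nonempty := by
  let b := Module.finBasis ℝ G
  refine ⟨_, _, fun i => LinearMap.toContinuousLinearMap (b.coord i), fun i => A (b i),
    fun v => ?_, rfl⟩
  conv_lhs => rw [← ContinuousLinearMap.sum_coord_smulRight b A]
  simp

variable (G X) in
noncomputable def nuclearSeminorm [FiniteDimensional ℝ G] : Seminorm ℝ (G →L[ℝ] X) :=
  sInfSeminorm nuclearCosts nuclearCosts_nonempty (fun _ _ => nonneg_of_mem_nuclearCosts)
    (fun _ _ a ha b hb => ⟨a + b, add_mem_nuclearCosts ha hb, le_rfl⟩)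
    (fun r _ _ => smul_mem_nuclearCosts r)

theorem nuclearNorm_smulRight_le (f : G →L[ℝ] ℝ) (x : X) :
    nuclearNorm (f.smulRight x) ≤ ‖f‖ * ‖x‖ :=
  csInf_le ⟨0, fun _ => nonneg_of_mem_nuclearCosts⟩ (smulRight_mem_nuclearCosts f x)

theorem apply_le_mul_nuclearNorm [FiniteDimensional ℝ G] (φ : Module.Dual ℝ (G →L[ℝ] X))
    {C : ℝ} (hC : 0 ≤ C) (h : ∀ (f : G →L[ℝ] ℝ) (x : X), φ (f.smulRight x) ≤ C * (‖f‖ * ‖x‖))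
    (A : G →L[ℝ] X) : φ A ≤ C * nuclearNorm A := by
  refine Real.le_mul_sInf (nuclearCosts_nonempty A) hC ?_
  rintro _ ⟨k, f, x, hA, rfl⟩
  have hsum : A = ∑ i, (f i).smulRight (x i) := by ext v; simp [hA]
  rw [hsum, map_sum, Finset.mul_sum]
  exact Finset.sum_le_sum fun i _ => h _ _

theorem trace_comp_le_opNorm_mul_nuclearNorm [FiniteDimensional ℝ G] (A : G →L[ℝ] X)
    (B : X →L[ℝ] G) : LinearMap.trace ℝ G (B.comp A) ≤ ‖B‖ * nuclearNorm A := by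
  refine apply_le_mul_nuclearNorm (LinearMap.trace ℝ G ∘ₗ ContinuousLinearMap.coeLM ℝ ∘ₗ
    (ContinuousLinearMap.compL ℝ G X G B).toLinearMap) (norm_nonneg B) (fun f x => ?_) A
  have hrankOne : ((B.comp (f.smulRight x) : G →L[ℝ] G) : G →ₗ[ℝ] G) =
      (f : G →ₗ[ℝ] ℝ).smulRight (B x) := by
    ext; simp
  calc LinearMap.trace ℝ G (B.comp (f.smulRight x)) = f (B x) := by
        rw [hrankOne, LinearMap.trace_smulRight, ContinuousLinearMap.coe_coe]
    _ ≤ ‖f‖ * ‖B x‖ := (le_abs_self _).trans (f.le_opNorm _)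
    _ ≤ ‖f‖ * (‖B‖ * ‖x‖) := by gcongr; exact B.le_opNorm x
    _ = ‖B‖ * (‖f‖ * ‖x‖) := by ring

theorem exists_opNorm_le_one_trace_comp_eq_nuclearNorm [FiniteDimensional ℝ G]
    (A : G →L[ℝ] X) :
    ∃ B : X →L[ℝ] G, ‖B‖ ≤ 1 ∧ LinearMap.trace ℝ G (B.comp A) = nuclearNorm A := by
  obtain ⟨φ, hφ, hφA⟩ := (nuclearSeminorm G X).exists_dual_abs_le_apply_eq A
  have hbound (x : X) : ‖φ.toOperator x‖ ≤ 1 * ‖x‖ := by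
    rw [one_mul]
    refine NormedSpace.norm_le_dual_bound ℝ _ (norm_nonneg x) fun g => ?_
    rw [Real.norm_eq_abs, φ.apply_toOperator]
    calc |φ (g.smulRight x)| ≤ nuclearNorm (g.smulRight x) := hφ _
      _ ≤ ‖g‖ * ‖x‖ := nuclearNorm_smulRight_le g x
      _ = ‖x‖ * ‖g‖ := mul_comm _ _
  exact ⟨φ.toOperator.mkContinuous 1 hbound, LinearMap.mkContinuous_norm_le _ zero_le_one hbound,
    (φ.trace_toOperator_comp A).trans hφA⟩

end NuclearNorm

section ExtensionNorm

variable {X : Type*} [NormedAddCommGroup X] [NormedSpace ℝ X] (E : Submodule ℝ X)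
  {Y : Type*} [NormedAddCommGroup Y] [NormedSpace ℝ Y] [FiniteDimensional ℝ Y]

def extensionCosts (T : E →L[ℝ] Y) : Set ℝ :=
  {c | ∃ Tt : X →L[ℝ] Y, (∀ v : E, Tt (v : X) = T v) ∧ c = ‖Tt‖}

theorem extensionCosts_nonempty (T : E →L[ℝ] Y) : (extensionCosts E T).Nonempty := by
  obtain ⟨Tt, rfl⟩ := T.exist_extension_of_finiteDimensional_range
  exact ⟨_, Tt, fun _ => rfl, rfl⟩

variable (Y) in
noncomputable def extensionSeminorm : Seminorm ℝ (E →L[ℝ] Y) :=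
  sInfSeminorm (extensionCosts E) (extensionCosts_nonempty E)
    (by rintro _ _ ⟨Tt, -, rfl⟩; exact norm_nonneg Tt)
    (by
      rintro _ _ _ ⟨Tt₁, h₁, rfl⟩ _ ⟨Tt₂, h₂, rfl⟩
      exact ⟨_, ⟨Tt₁ + Tt₂, fun v => by simp [h₁, h₂], rfl⟩, norm_add_le _ _⟩)
    (by
      rintro r _ _ ⟨Tt, h, rfl⟩
      exact ⟨r • Tt, fun v => by simp [h], by rw [norm_smul, Real.norm_eq_abs]⟩)

variable {E}

theorem extensionSeminorm_le_opNorm {T : E →L[ℝ] Y} {Tt : X →L[ℝ] Y}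
    (h : ∀ v : E, Tt (v : X) = T v) : extensionSeminorm E Y T ≤ ‖Tt‖ :=
  csInf_le ⟨0, by rintro _ ⟨Tt, -, rfl⟩; exact norm_nonneg Tt⟩ ⟨Tt, h, rfl⟩

variable [FiniteDimensional ℝ E]

theorem trace_comp_le_nuclearNorm_mul_extensionSeminorm (S : Y →L[ℝ] E) (T : E →L[ℝ] Y) :
    LinearMap.trace ℝ E (S.comp T) ≤
      nuclearNorm (E.subtypeL.comp S) * extensionSeminorm E Y T := by
  refine Real.le_mul_sInf (extensionCosts_nonempty E T)
    (apply_nonneg (nuclearSeminorm Y X) _) ?_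
  rintro _ ⟨Tt, hTt, rfl⟩
  calc LinearMap.trace ℝ E (S.comp T) = LinearMap.trace ℝ Y (T.comp S) := by
        rw [ContinuousLinearMap.toLinearMap_comp, ContinuousLinearMap.toLinearMap_comp,
          LinearMap.trace_comp_comm']
    _ = LinearMap.trace ℝ Y (Tt.comp (E.subtypeL.comp S)) := by
        congr 2; ext; simp [hTt]
    _ ≤ ‖Tt‖ * nuclearNorm (E.subtypeL.comp S) := trace_comp_le_opNorm_mul_nuclearNorm _ _
    _ = nuclearNorm (E.subtypeL.comp S) * ‖Tt‖ := mul_comm _ _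

theorem exists_nuclearNorm_le_one_trace_comp_eq_extensionSeminorm (T : E →L[ℝ] Y) :
    ∃ S : Y →L[ℝ] E, nuclearNorm (E.subtypeL.comp S) ≤ 1 ∧
      LinearMap.trace ℝ E (S.comp T) = extensionSeminorm E Y T := by
  obtain ⟨ψ, hψ, hψT⟩ := (extensionSeminorm E Y).exists_dual_abs_le_apply_eq T
  let S : Y →L[ℝ] E := LinearMap.toContinuousLinearMap ψ.toOperator
  have htrace (T' : E →L[ℝ] Y) : LinearMap.trace ℝ E (S.comp T') = ψ T' :=
    ψ.trace_toOperator_comp T'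
  refine ⟨S, ?_, (htrace T).trans hψT⟩
  obtain ⟨B, hB, hBS⟩ := exists_opNorm_le_one_trace_comp_eq_nuclearNorm (E.subtypeL.comp S)
  calc nuclearNorm (E.subtypeL.comp S)
      = LinearMap.trace ℝ Y (B.comp (E.subtypeL.comp S)) := hBS.symm
    _ = LinearMap.trace ℝ E (S.comp (B.comp E.subtypeL)) := by
        rw [← ContinuousLinearMap.comp_assoc, ContinuousLinearMap.toLinearMap_comp _ S,
          ContinuousLinearMap.toLinearMap_comp S, LinearMap.trace_comp_comm']
    _ = ψ (B.comp E.subtypeL) := htrace _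
    _ ≤ extensionSeminorm E Y (B.comp E.subtypeL) := (le_abs_self _).trans (hψ _)
    _ ≤ ‖B‖ := extensionSeminorm_le_opNorm fun _ => rfl
    _ ≤ 1 := hB

end ExtensionNorm

theorem stmt_9_general (X : Type*) [NormedAddCommGroup X] [NormedSpace ℝ X]
    (E F : Submodule ℝ X) [FiniteDimensional ℝ E] [FiniteDimensional ℝ F]
    (T : E →L[ℝ] F) :
    sInf {c | ∃ Tt : X →L[ℝ] F, (∀ v : E, Tt (v : X) = T v) ∧ c = ‖Tt‖}
      = sSup {t | ∃ S : F →L[ℝ] E,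
          nuclearNorm (E.subtypeL.comp S) ≤ 1 ∧
          t = LinearMap.trace ℝ E ((S.comp T : E →L[ℝ] E) : E →ₗ[ℝ] E)} := by
  change extensionSeminorm E F T = _
  obtain ⟨S₀, hS₀, hS₀T⟩ := exists_nuclearNorm_le_one_trace_comp_eq_extensionSeminorm T
  symm
  apply IsGreatest.csSup_eq
  refine ⟨⟨S₀, hS₀, hS₀T.symm⟩, ?_⟩
  rintro _ ⟨S, hS, rfl⟩
  calc LinearMap.trace ℝ E (S.comp T)
      ≤ nuclearNorm (E.subtypeL.comp S) * extensionSeminorm E F T :=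
        trace_comp_le_nuclearNorm_mul_extensionSeminorm S T
    _ ≤ 1 * extensionSeminorm E F T := by gcongr
    _ = extensionSeminorm E F T := one_mul _

theorem stmt_9 (X : Type*) [NormedAddCommGroup X] [NormedSpace ℝ X] [CompleteSpace X]
    (E F : Submodule ℝ X) [FiniteDimensional ℝ E] [FiniteDimensional ℝ F]
    (hEF : E ≤ F) (T : E →L[ℝ] F) :
    sInf {c | ∃ Tt : X →L[ℝ] F, (∀ v : E, Tt (v : X) = T v) ∧ c = ‖Tt‖}
      = sSup {t | ∃ S : F →L[ℝ] E,
          nuclearNorm (E.subtypeL.comp S) ≤ 1 ∧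
          t = LinearMap.trace ℝ E ((S.comp T : E →L[ℝ] E) : E →ₗ[ℝ] E)} :=
  stmt_9_general X E F T
end

section
/- Every finite-rank operator S̃ : ℓ∞^N → X into a Banach space X can be written as S̃ = Σ_{i=1}^N e_i* ⊗ x_i with x_i ∈ X, where e_i* are the coordinate functionals, and its nuclear norm equals Σ_{i=1}^N ‖x_i‖. -/
lemma sum_single_eq (N : ℕ) (v : Fin N → ℝ) :
    v = ∑ i, v i • (Pi.single i 1 : Fin N → ℝ) := by
  funext j
  simp [Finset.sum_apply, Pi.single_apply]

lemma abs_sum_coord_le (N : ℕ) (g : (Fin N → ℝ) →L[ℝ] ℝ) :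
    ∑ i, |g (Pi.single i 1)| ≤ ‖g‖ := by
  classical
  set w : Fin N → ℝ := fun i => if g (Pi.single i 1) < 0 then -1 else 1 with hw
  have hwn : ‖w‖ ≤ 1 := by
    refine (pi_norm_le_iff_of_nonneg zero_le_one).2 fun i => ?_
    simp only [hw]
    split_ifs <;> simp
  have hgw : g w = ∑ i, |g (Pi.single i 1)| := by
    conv_lhs => rw [sum_single_eq N w]
    rw [map_sum]
    refine Finset.sum_congr rfl fun i _ => ?_
    rw [map_smul]
    simp only [hw, smul_eq_mul]
    split_ifs with h
    · rw [abs_of_neg h]; ring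
    · rw [abs_of_nonneg (not_lt.1 h)]; ring
  calc ∑ i, |g (Pi.single i 1)| = g w := hgw.symm
    _ ≤ ‖g‖ * ‖w‖ := (le_abs_self _).trans (by rw [← Real.norm_eq_abs]; exact g.le_opNorm w)
    _ ≤ ‖g‖ := by nlinarith [norm_nonneg g]

/-- For operators on `ℓ∞^N` (that is, `Fin N → ℝ` with the sup norm), the canonical
coordinate representation attains the nuclear norm. -/
theorem stmt_12 (X : Type*) [NormedAddCommGroup X] [NormedSpace ℝ X] [CompleteSpace X]
    (N : ℕ) (S : (Fin N → ℝ) →L[ℝ] X) :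
    ∃ x : Fin N → X,
      (∀ v : Fin N → ℝ, S v = ∑ i, v i • x i) ∧
      nuclearNorm S = ∑ i, ‖x i‖ := by
  classical
  set x : Fin N → X := fun i => S (Pi.single i 1) with hx
  have hrep : ∀ v : Fin N → ℝ, S v = ∑ i, v i • x i := by
    intro v
    conv_lhs => rw [sum_single_eq N v]
    rw [map_sum]
    simp [hx]
  refine ⟨x, hrep, ?_⟩
  set T : Set ℝ := {c | ∃ (k : ℕ) (f : Fin k → ((Fin N → ℝ) →L[ℝ] ℝ)) (y : Fin k → X),
    (∀ v, S v = ∑ i, f i v • y i) ∧ c = ∑ i, ‖f i‖ * ‖y i‖} with hT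
  have hlb : ∀ c ∈ T, ∑ i, ‖x i‖ ≤ c := by
    rintro c ⟨k, f, y, hf, rfl⟩
    have h1 : ∀ i : Fin N, ‖x i‖ ≤ ∑ j, |f j (Pi.single i 1)| * ‖y j‖ := by
      intro i
      rw [hx]
      simp only
      rw [hf]
      refine (norm_sum_le _ _).trans (le_of_eq ?_)
      refine Finset.sum_congr rfl fun j _ => ?_
      rw [norm_smul, Real.norm_eq_abs]
    calc ∑ i, ‖x i‖ ≤ ∑ i, ∑ j, |f j (Pi.single i 1)| * ‖y j‖ :=
          Finset.sum_le_sum fun i _ => h1 i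
      _ = ∑ j, (∑ i, |f j (Pi.single i 1)|) * ‖y j‖ := by
          rw [Finset.sum_comm]
          exact Finset.sum_congr rfl fun j _ => (Finset.sum_mul _ _ _).symm
      _ ≤ ∑ j, ‖f j‖ * ‖y j‖ :=
          Finset.sum_le_sum fun j _ =>
            mul_le_mul_of_nonneg_right (abs_sum_coord_le N (f j)) (norm_nonneg _)
  have hmem : (∑ i, ‖(ContinuousLinearMap.proj i : (Fin N → ℝ) →L[ℝ] ℝ)‖ * ‖x i‖) ∈ T := by
    refine ⟨N, fun i => ContinuousLinearMap.proj i, x, fun v => ?_, rfl⟩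
    simpa using hrep v
  have hproj : ∀ i : Fin N, ‖(ContinuousLinearMap.proj i : (Fin N → ℝ) →L[ℝ] ℝ)‖ ≤ 1 := by
    intro i
    refine ContinuousLinearMap.opNorm_le_bound _ zero_le_one fun v => ?_
    simpa using (norm_le_pi_norm v i).trans (by simp)
  have hle : nuclearNorm S ≤ ∑ i, ‖x i‖ := by
    refine (csInf_le ⟨∑ i, ‖x i‖, hlb⟩ hmem).trans ?_
    refine Finset.sum_le_sum fun i _ => ?_
    calc ‖(ContinuousLinearMap.proj i : (Fin N → ℝ) →L[ℝ] ℝ)‖ * ‖x i‖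
        ≤ 1 * ‖x i‖ := mul_le_mul_of_nonneg_right (hproj i) (norm_nonneg _)
      _ = ‖x i‖ := one_mul _
  have hge : ∑ i, ‖x i‖ ≤ nuclearNorm S :=
    le_csInf ⟨_, hmem⟩ hlb
  exact le_antisymm hle hge
end
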